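/- Let f : [a,b] → ℝ be differentiable with f' of bounded variation on [a,b], a < b. Then |∫_a^b f(x) dx - ((b-a)/6)·[f(a) + 4·f((a+b)/2) + f(b)]| ≤ ((b-a)²/24)·V_a^b(f'). -/

import Mathlib

/-!
Peano-kernel argument. For the piecewise linear kernel `K = simpsonKernel a b`, integration by
parts on each half of `[a, b]` gives the Simpson error as `-∫ K f'`. The primitive
`c ↦ ∫_c^b K` vanishes at `a` and is bounded by `(b - a)² / 24` on `[a, b]`.

For monotone `g`, the layer-cake formula `g x - g a = ∫_{g a}^{g b} 1[t ≤ g x] dt` and Fubini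
write `∫ K g` as an integral over `t ∈ (g a, g b]` of integrals of `K` over the superlevel sets
`{g ≥ t}`; up to a null set these are intervals `(c, b]`, so
`|∫ K g| ≤ (b - a)² / 24 · (g b - g a)`.
The Jordan decomposition `f' = p - q` into monotone `p, q` with
`(p b - p a) + (q b - q a) = V_a^b(f')` then gives the bound.
-/

open MeasureTheory Set intervalIntegral

-- The nodes `(5a+b)/6`, `(a+5b)/6` make the boundary terms of integration by parts on the two
-- halves produce the Simpson weights `1/6, 4/6, 1/6`.
noncomputable def simpsonKernel (a b x : ℝ) : ℝ :=
  if x ≤ (a + b) / 2 then x - (5 * a + b) / 6 else x - (a + 5 * b) / 6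

namespace simpsonKernel

variable {a b c d : ℝ}

theorem eqOn_left (hc : c ≤ (a + b) / 2) (hd : d ≤ (a + b) / 2) :
    EqOn (simpsonKernel a b) (fun x => x - (5 * a + b) / 6) (uIoo c d) := fun x hx => by
  have : x ≤ (a + b) / 2 := hx.2.le.trans (max_le hc hd)
  simp only [simpsonKernel, if_pos this]

theorem eqOn_right (hc : (a + b) / 2 ≤ c) (hd : (a + b) / 2 ≤ d) :
    EqOn (simpsonKernel a b) (fun x => x - (a + 5 * b) / 6) (uIoo c d) := fun x hx => by
  have : ¬ x ≤ (a + b) / 2 := not_le.2 ((le_min hc hd).trans_lt hx.1)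
  simp only [simpsonKernel, if_neg this]

theorem intervalIntegrable (hc : c ≤ (a + b) / 2) (hd : (a + b) / 2 ≤ d) :
    IntervalIntegrable (simpsonKernel a b) volume c d :=
  ((intervalIntegrable_congr_uIoo (eqOn_left hc le_rfl)).2
      ((continuous_id.sub continuous_const).intervalIntegrable _ _)).trans
    ((intervalIntegrable_congr_uIoo (eqOn_right le_rfl hd)).2
      ((continuous_id.sub continuous_const).intervalIntegrable _ _))

theorem integral_of_le_mid (hab : a ≤ b) (hc : c ≤ (a + b) / 2) :
    ∫ x in c..b, simpsonKernel a b x = (b - a) ^ 2 / 72 - (c - (5 * a + b) / 6) ^ 2 / 2 := by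
  have hmb : (a + b) / 2 ≤ b := by linarith
  rw [← integral_add_adjacent_intervals (intervalIntegrable hc le_rfl)
      (intervalIntegrable le_rfl hmb),
    integral_congr_uIoo (eqOn_left hc le_rfl), integral_congr_uIoo (eqOn_right le_rfl hmb)]
  simp only [integral_comp_sub_right (fun x => x), integral_id]
  ring

theorem integral_of_mid_le (hc : (a + b) / 2 ≤ c) (hcb : c ≤ b) :
    ∫ x in c..b, simpsonKernel a b x = ((b - a) ^ 2 / 36 - (c - (a + 5 * b) / 6) ^ 2) / 2 := by
  rw [integral_congr_uIoo (eqOn_right hc (hc.trans hcb))]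
  simp only [integral_comp_sub_right (fun x => x), integral_id]
  ring

theorem integral_eq_zero (hab : a ≤ b) : ∫ x in a..b, simpsonKernel a b x = 0 := by
  rw [integral_of_le_mid hab (by linarith)]
  ring

theorem abs_integral_le (hc : c ∈ Icc a b) :
    |∫ x in c..b, simpsonKernel a b x| ≤ (b - a) ^ 2 / 24 := by
  obtain ⟨hac, hcb⟩ := hc
  rcases le_total c ((a + b) / 2) with hcm | hmc
  · rw [integral_of_le_mid (hac.trans hcb) hcm, abs_le]
    constructor <;> nlinarith
  · rw [integral_of_mid_le hmc hcb, abs_le]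
    constructor <;> nlinarith

end simpsonKernel

theorem integral_sub_const_mul_deriv {f f' : ℝ → ℝ} {c d e : ℝ}
    (hf : ∀ x ∈ uIcc c d, HasDerivAt f (f' x) x) (hf' : IntervalIntegrable f' volume c d) :
    ∫ x in c..d, (x - e) * f' x = (d - e) * f d - (c - e) * f c - ∫ x in c..d, f x := by
  simpa using integral_mul_deriv_eq_deriv_mul (fun x _ => (hasDerivAt_id x).sub_const e) hf
    intervalIntegrable_const hf'

theorem simpson_error_eq_neg_integral_simpsonKernel_mul {f f' : ℝ → ℝ} {a b : ℝ}
    (hab : a ≤ b) (hf : ∀ x ∈ Icc a b, HasDerivAt f (f' x) x)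
    (hf' : IntervalIntegrable f' volume a b) :
    (∫ x in a..b, f x) - (b - a) / 6 * (f a + 4 * f ((a + b) / 2) + f b) =
      -∫ x in a..b, simpsonKernel a b x * f' x := by
  set m := (a + b) / 2 with hm
  have ham : a ≤ m := by rw [hm]; linarith
  have hmb : m ≤ b := by rw [hm]; linarith
  have hsub₁ : uIcc a m ⊆ Icc a b := uIcc_subset_Icc ⟨le_rfl, hab⟩ ⟨ham, hmb⟩
  have hsub₂ : uIcc m b ⊆ Icc a b := uIcc_subset_Icc ⟨ham, hmb⟩ ⟨hab, le_rfl⟩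
  have hf'₁ : IntervalIntegrable f' volume a m := hf'.mono_set (uIcc_of_le hab ▸ hsub₁)
  have hf'₂ : IntervalIntegrable f' volume m b := hf'.mono_set (uIcc_of_le hab ▸ hsub₂)
  have hK₁ : EqOn (fun x => simpsonKernel a b x * f' x) (fun x => (x - (5 * a + b) / 6) * f' x)
      (uIoo a m) := fun x hx => congrArg (· * f' x) (simpsonKernel.eqOn_left ham le_rfl hx)
  have hK₂ : EqOn (fun x => simpsonKernel a b x * f' x) (fun x => (x - (a + 5 * b) / 6) * f' x)
      (uIoo m b) := fun x hx => congrArg (· * f' x) (simpsonKernel.eqOn_right le_rfl hmb hx)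
  have hfc : ContinuousOn f (Icc a b) := fun x hx => (hf x hx).continuousAt.continuousWithinAt
  rw [← integral_add_adjacent_intervals ((hfc.mono hsub₁).intervalIntegrable)
      ((hfc.mono hsub₂).intervalIntegrable),
    ← integral_add_adjacent_intervals
      ((intervalIntegrable_congr_uIoo hK₁).2 (hf'₁.continuousOn_mul (by fun_prop)))
      ((intervalIntegrable_congr_uIoo hK₂).2 (hf'₂.continuousOn_mul (by fun_prop))),
    integral_congr_uIoo hK₁, integral_congr_uIoo hK₂,
    integral_sub_const_mul_deriv (fun x hx => hf x (hsub₁ hx)) hf'₁,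
    integral_sub_const_mul_deriv (fun x hx => hf x (hsub₂ hx)) hf'₂]
  ring

theorem setIntegral_mul_sub_eq_integral_superlevel {K g : ℝ → ℝ} {a b : ℝ}
    (hK : IntegrableOn K (Ioc a b)) (hg : Monotone g) :
    ∫ x in Ioc a b, K x * (g x - g a) =
      ∫ t in Ioc (g a) (g b), ∫ x in Ioc a b ∩ {x | t ≤ g x}, K x := by
  set F : ℝ → ℝ → ℝ := fun x t => if t ≤ g x then K x else 0 with hF
  have hFint : Integrable (Function.uncurry F)
      ((volume.restrict (Ioc a b)).prod (volume.restrict (Ioc (g a) (g b)))) := by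
    have hmeas : MeasurableSet {p : ℝ × ℝ | p.2 ≤ g p.1} :=
      measurableSet_le measurable_snd (hg.measurable.comp measurable_fst)
    refine (hK.norm.comp_fst _).mono' ?_ (ae_of_all _ fun p => ?_)
    · have : Function.uncurry F = {p : ℝ × ℝ | p.2 ≤ g p.1}.indicator (fun p => K p.1) := by
        ext p; simp [hF, Function.uncurry, indicator_apply]
      rw [this]
      exact hK.aestronglyMeasurable.comp_fst.indicator hmeas
    · simp only [Function.uncurry, hF]
      split_ifs <;> simp
  have hinner_t : ∀ x ∈ Ioc a b, ∫ t in Ioc (g a) (g b), F x t = K x * (g x - g a) := by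
    intro x hx
    have hgx : g x ≤ g b := hg hx.2
    have : ∀ t, F x t = (Iic (g x)).indicator (fun _ => K x) t := fun t => by
      simp [hF, indicator_apply]
    simp_rw [this]
    rw [setIntegral_indicator measurableSet_Iic, Ioc_inter_Iic, min_eq_right hgx,
      setIntegral_const, smul_eq_mul, measureReal_def, Real.volume_Ioc,
      ENNReal.toReal_ofReal (sub_nonneg.2 (hg hx.1.le)), mul_comm]
  have hinner_x : ∀ t, ∫ x in Ioc a b, F x t = ∫ x in Ioc a b ∩ {x | t ≤ g x}, K x := by
    intro t
    rw [← setIntegral_indicator (measurableSet_le measurable_const hg.measurable)]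
    simp [hF, indicator_apply]
  calc ∫ x in Ioc a b, K x * (g x - g a)
      = ∫ x in Ioc a b, ∫ t in Ioc (g a) (g b), F x t :=
        setIntegral_congr_fun measurableSet_Ioc fun x hx => (hinner_t x hx).symm
    _ = ∫ t in Ioc (g a) (g b), ∫ x in Ioc a b, F x t := integral_integral_swap hFint
    _ = _ := by simp_rw [hinner_x]

theorem Monotone.exists_superlevel_ae_eq_Ioc {g : ℝ → ℝ} (hg : Monotone g) {a b t : ℝ}
    (hab : a ≤ b) (ht : t ≤ g b) :
    ∃ c ∈ Icc a b, Ioc c b =ᵐ[volume] (Ioc a b ∩ {x | t ≤ g x} : Set ℝ) := by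
  set S := {x | t ≤ g x} ∩ Icc a b
  have hne : S.Nonempty := ⟨b, ht, hab, le_rfl⟩
  have hbdd : BddBelow S := ⟨a, fun y hy => hy.2.1⟩
  have hca : a ≤ sInf S := le_csInf hne fun y hy => hy.2.1
  have hcb : sInf S ≤ b := csInf_le hbdd ⟨ht, hab, le_rfl⟩
  refine ⟨sInf S, ⟨hca, hcb⟩, ae_eq_of_subset_of_measure_ge ?_ ?_
    measurableSet_Ioc.nullMeasurableSet
    ((measure_mono inter_subset_left).trans_lt measure_Ioc_lt_top).ne⟩
  · intro x hx
    obtain ⟨y, hy, hyx⟩ := exists_lt_of_csInf_lt hne hx.1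
    exact ⟨⟨hca.trans_lt hx.1, hx.2⟩, hy.1.trans (hg hyx.le)⟩
  · calc volume (Ioc a b ∩ {x | t ≤ g x}) ≤ volume (Icc (sInf S) b) :=
          measure_mono fun x hx => ⟨csInf_le hbdd ⟨hx.2, hx.1.1.le, hx.1.2⟩, hx.1.2⟩
      _ = volume (Ioc (sInf S) b) := by rw [Real.volume_Icc, Real.volume_Ioc]

theorem IntervalIntegrable.mul_monotone {K g : ℝ → ℝ} {a b : ℝ}
    (hK : IntervalIntegrable K volume a b) (hg : Monotone g) :
    IntervalIntegrable (fun x => K x * g x) volume a b := by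
  rw [intervalIntegrable_iff] at hK ⊢
  refine hK.mul_bdd (c := max |g (a ⊓ b)| |g (a ⊔ b)|) hg.measurable.aestronglyMeasurable
    ((ae_restrict_iff' measurableSet_uIoc).2 (ae_of_all _ fun x hx => ?_))
  exact abs_le_max_abs_abs (hg hx.1.le) (hg hx.2)

theorem abs_integral_mul_le_of_monotone {K g : ℝ → ℝ} {a b M : ℝ} (hab : a ≤ b)
    (hK : IntervalIntegrable K volume a b) (hg : Monotone g)
    (hM : ∀ c ∈ Icc a b, |∫ x in c..b, K x| ≤ M) (h0 : ∫ x in a..b, K x = 0) :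
    |∫ x in a..b, K x * g x| ≤ M * (g b - g a) := by
  have hK' : IntegrableOn K (Ioc a b) := (intervalIntegrable_iff_integrableOn_Ioc_of_le hab).1 hK
  have hKg : ∫ x in a..b, K x * g x = ∫ x in Ioc a b, K x * (g x - g a) := by
    simp_rw [mul_sub]
    rw [← integral_of_le hab, integral_sub (hK.mul_monotone hg) (hK.mul_const _),
      intervalIntegral.integral_mul_const, h0, zero_mul, sub_zero]
  have hlevel :
      ∀ t ∈ Ioc (g a) (g b), ‖∫ x in Ioc a b ∩ {x | t ≤ g x}, K x‖ ≤ M := by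
    intro t ht
    obtain ⟨c, hc, hae⟩ := hg.exists_superlevel_ae_eq_Ioc hab ht.2
    rw [← setIntegral_congr_set hae, ← integral_of_le hc.2]
    exact hM c hc
  calc |∫ x in a..b, K x * g x|
      = ‖∫ t in Ioc (g a) (g b), ∫ x in Ioc a b ∩ {x | t ≤ g x}, K x‖ := by
        rw [hKg, setIntegral_mul_sub_eq_integral_superlevel hK' hg, Real.norm_eq_abs]
    _ ≤ M * volume.real (Ioc (g a) (g b)) :=
        norm_setIntegral_le_of_norm_le_const measure_Ioc_lt_top hlevel
    _ = M * (g b - g a) := by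
        rw [measureReal_def, Real.volume_Ioc, ENNReal.toReal_ofReal (sub_nonneg.2 (hg hab))]

theorem BoundedVariationOn.exists_monotone_sub_eqOn {g : ℝ → ℝ} {a b : ℝ}
    (hg : BoundedVariationOn g (Icc a b)) (hab : a ≤ b) :
    ∃ p q : ℝ → ℝ, Monotone p ∧ Monotone q ∧ EqOn g (p - q) (Icc a b) ∧
      (p b - p a) + (q b - q a) = (eVariationOn g (Icc a b)).toReal := by
  have ha : a ∈ Icc a b := ⟨le_rfl, hab⟩
  set v := variationOnFromTo g (Icc a b) a
  have hv := hg.locallyBoundedVariationOn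
  have hext : ∀ {φ : ℝ → ℝ}, MonotoneOn φ (Icc a b) →
      Monotone (fun x => φ (projIcc a b hab x)) :=
    fun hφ x y hxy => hφ (projIcc a b hab x).2 (projIcc a b hab y).2 (monotone_projIcc hab hxy)
  refine ⟨fun x => (v + g) (projIcc a b hab x) / 2, fun x => (v - g) (projIcc a b hab x) / 2,
    (hext (variationOnFromTo.add_self_monotoneOn hv ha)).div_const zero_le_two,
    (hext (variationOnFromTo.sub_self_monotoneOn hv ha)).div_const zero_le_two,
    fun x hx => ?_, ?_⟩
  · simp only [Pi.sub_apply, Pi.add_apply, projIcc_of_mem hab hx]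
    ring
  · simp only [Pi.sub_apply, Pi.add_apply, projIcc_left, projIcc_right]
    have hva : v a = 0 := variationOnFromTo.self _ _ _
    have hvb : v b = (eVariationOn g (Icc a b)).toReal := by
      simp only [v, variationOnFromTo.eq_of_le _ _ hab, inter_self]
    rw [hva, hvb]
    ring

theorem abs_integral_mul_le_of_boundedVariationOn {K g : ℝ → ℝ} {a b M : ℝ} (hab : a ≤ b)
    (hK : IntervalIntegrable K volume a b) (hM : ∀ c ∈ Icc a b, |∫ x in c..b, K x| ≤ M)
    (h0 : ∫ x in a..b, K x = 0) (hg : BoundedVariationOn g (Icc a b)) :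
    |∫ x in a..b, K x * g x| ≤ M * (eVariationOn g (Icc a b)).toReal := by
  obtain ⟨p, q, hp, hq, hpq, hvar⟩ := hg.exists_monotone_sub_eqOn hab
  have hsplit :
      ∫ x in a..b, K x * g x = (∫ x in a..b, K x * p x) - ∫ x in a..b, K x * q x := by
    rw [← integral_sub (hK.mul_monotone hp) (hK.mul_monotone hq)]
    refine integral_congr fun x hx => ?_
    rw [hpq (uIcc_of_le hab ▸ hx), Pi.sub_apply, mul_sub]
  calc |∫ x in a..b, K x * g x|
      ≤ |∫ x in a..b, K x * p x| + |∫ x in a..b, K x * q x| := hsplit ▸ abs_sub _ _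
    _ ≤ M * (p b - p a) + M * (q b - q a) :=
        add_le_add (abs_integral_mul_le_of_monotone hab hK hp hM h0)
          (abs_integral_mul_le_of_monotone hab hK hq hM h0)
    _ = M * (eVariationOn g (Icc a b)).toReal := by rw [← mul_add, hvar]

theorem BoundedVariationOn.intervalIntegrable {g : ℝ → ℝ} {a b : ℝ}
    (hg : BoundedVariationOn g (uIcc a b)) : IntervalIntegrable g volume a b := by
  obtain ⟨p, q, hp, hq, rfl⟩ := hg.locallyBoundedVariationOn.exists_monotoneOn_sub_monotoneOn
  exact hp.intervalIntegrable.sub hq.intervalIntegrable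

theorem simpson_deriv_bounded_variation
    (f : ℝ → ℝ) (a b : ℝ) (hab : a < b)
    (hdiff : ∀ x ∈ Set.Icc a b, HasDerivAt f (deriv f x) x)
    (hbv : BoundedVariationOn (deriv f) (Set.Icc a b)) :
    |(∫ x in a..b, f x) - ((b-a)/6) * (f a + 4 * f ((a+b)/2) + f b)|
      ≤ ((b-a)^2 / 24) * (eVariationOn (deriv f) (Set.Icc a b)).toReal := by
  have hab' := hab.le
  have hf' : IntervalIntegrable (deriv f) volume a b :=
    BoundedVariationOn.intervalIntegrable (by rwa [uIcc_of_le hab'])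
  rw [simpson_error_eq_neg_integral_simpsonKernel_mul hab' hdiff hf', abs_neg]
  exact abs_integral_mul_le_of_boundedVariationOn hab'
    (simpsonKernel.intervalIntegrable (by linarith) (by linarith))
    (fun c hc => simpsonKernel.abs_integral_le hc) (simpsonKernel.integral_eq_zero hab') hbv
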